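/- Let X be a compact pospace whose partial order is lower open, and let Y be a complete lattice carrying a Lawson-lattice topology. Suppose f, g : X → Y are continuous functions that are homotopic, i.e. there is a continuous H : X × [0,1] → Y with H(·,0) = f and H(·,1) = g. Define R(f)(x) = ⨅ { f(x') | x ≤ x' } and R(g)(x) = ⨅ { g(x') | x ≤ x' }. Then R(f) and R(g) are homotopic through monotone maps: there exists a continuous K : X × [0,1] → Y with K(·,0) = R(f), K(·,1) = R(g), and K(·,t) : X → Y monotone for every t ∈ [0,1]. -/

import Mathlib

/-!
Put `K (x, t) = infAbove (H (·, t)) x`. Every `K (·, t)` is monotone, so only joint continuity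
is at stake, and since `Y` is compact Hausdorff it suffices that every cluster point `z` of `K`
at `(x₀, t₀)` equals `y₀ = K (x₀, t₀)`.

Lower openness gives `z ≤ y₀`: for `x' ≥ x₀`, every `x` in the open set `↓V`, `V` a
neighbourhood of `x'`, satisfies `K (x, t) ≤ H (v, t)` for some `v ∈ V`, and in a compact
pospace the lower closure of a closed set is closed.

For `y₀ ≤ z`, the map `H ⊓ y₀` is constantly `y₀` on the compact set `↑x₀ × {t₀}`, so the tube
lemma and the closedness of the order of `X` put `H (x', t) ⊓ y₀` into a given inf-closed
neighbourhood `W` of `y₀` whenever `x ≤ x'` and `(x, t)` is near `(x₀, t₀)`. In a compact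
pospace the infimum of a family lies in the closure of every inf-closed set containing it, so
`K (x, t) ⊓ y₀ ∈ closure W`; hence `z ⊓ y₀` lies in every neighbourhood of `y₀`.
-/

open unitInterval

open Set Filter Topology

theorem OrderClosedTopology.of_continuousInf {L : Type*} [TopologicalSpace L] [SemilatticeInf L]
    [ContinuousInf L] [T2Space L] : OrderClosedTopology L :=
  ⟨by simpa only [inf_eq_left] using isClosed_eq (continuous_inf (L := L)) continuous_fst⟩

section CompactOrderClosed

variable {α : Type*} [TopologicalSpace α] [CompactSpace α]

theorem IsClosed.lowerClosure_of_compactSpace [Preorder α] [OrderClosedTopology α] {s : Set α}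
    (hs : IsClosed s) : IsClosed (lowerClosure s : Set α) := by
  have : (lowerClosure s : Set α) = Prod.fst '' ({p : α × α | p.1 ≤ p.2} ∩ Prod.snd ⁻¹' s) := by
    ext x
    simp [mem_lowerClosure, and_comm]
  rw [this]
  exact isClosedMap_fst_of_compactSpace _ (isClosed_le_prod.inter (hs.preimage continuous_snd))

theorem IsOpen.setOf_Ici_subset [Preorder α] [OrderClosedTopology α] {U : Set α}
    (hU : IsOpen U) : IsOpen {x | Ici x ⊆ U} := by
  have : {x | Ici x ⊆ U} = (lowerClosure Uᶜ : Set α)ᶜ := by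
    ext x
    simp [mem_lowerClosure, subset_def, not_imp_not]
  rw [this]
  exact hU.isClosed_compl.lowerClosure_of_compactSpace.isOpen_compl

theorem sInf_mem_closure_of_infClosed [CompleteLattice α] [OrderClosedTopology α]
    {s S : Set α} (hS : InfClosed S) (hsS : s ⊆ S) (hs : s.Nonempty) : sInf s ∈ closure S := by
  let ι := {u : α // u ∈ S ∧ sInf s ≤ u}
  obtain ⟨a, ha⟩ := hs
  have : Nonempty ι := ⟨⟨a, hsS ha, sInf_le ha⟩⟩
  let t : ι → Set α := fun u => closure S ∩ Icc (sInf s) u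
  have htc : ∀ u, IsClosed (t u) := fun u => isClosed_closure.inter isClosed_Icc
  obtain ⟨z, hz⟩ := IsCompact.nonempty_iInter_of_directed_nonempty_isCompact_isClosed t
    (fun u v => ⟨⟨u.1 ⊓ v.1, hS u.2.1 v.2.1, le_inf u.2.2 v.2.2⟩,
      fun _ hw => ⟨hw.1, hw.2.1, hw.2.2.trans inf_le_left⟩,
      fun _ hw => ⟨hw.1, hw.2.1, hw.2.2.trans inf_le_right⟩⟩)
    (fun u => ⟨u, subset_closure u.2.1, u.2.2, le_rfl⟩) (fun u => (htc u).isCompact) htc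
  rw [mem_iInter] at hz
  have hzs : z = sInf s := le_antisymm
    (le_sInf fun b hb => (hz ⟨b, hsS hb, sInf_le hb⟩).2.2) (hz ⟨a, hsS ha, sInf_le ha⟩).2.1
  exact hzs ▸ (hz ⟨a, hsS ha, sInf_le ha⟩).1

end CompactOrderClosed

section InfAbove

variable {X P Y : Type*} [Preorder X] [CompleteLattice Y]

def infAbove (f : X → Y) (x : X) : Y := sInf (f '' Ici x)

theorem infAbove_le {f : X → Y} {x x' : X} (h : x ≤ x') : infAbove f x ≤ f x' :=
  sInf_le ⟨x', h, rfl⟩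

theorem monotone_infAbove (f : X → Y) : Monotone (infAbove f) := fun _ _ h =>
  sInf_le_sInf (image_mono (Ici_subset_Ici.2 h))

variable [TopologicalSpace X] [TopologicalSpace P] [TopologicalSpace Y] {H : X × P → Y}

theorem eventually_infAbove_mem_lowerClosure
    (hlo : ∀ V : Set X, IsOpen V → IsOpen (lowerClosure V : Set X)) (hH : Continuous H)
    {x₀ x' : X} (hx' : x₀ ≤ x') (t₀ : P) {A : Set Y} (hA : A ∈ 𝓝 (H (x', t₀))) :
    ∀ᶠ q in 𝓝 (x₀, t₀), infAbove (fun x => H (x, q.2)) q.1 ∈ lowerClosure A := by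
  obtain ⟨V, T, hV, hx'V, hT, ht₀T, hVT⟩ := mem_nhds_prod_iff'.1 (hH.continuousAt hA)
  filter_upwards [prod_mem_nhds ((hlo V hV).mem_nhds ⟨x', hx'V, hx'⟩) (hT.mem_nhds ht₀T)]
  rintro ⟨x, t⟩ ⟨⟨v, hv, hxv⟩, ht⟩
  exact ⟨H (v, t), hVT ⟨hv, ht⟩, infAbove_le hxv⟩

variable [CompactSpace Y] [OrderClosedTopology Y]

theorem MapClusterPt.le_infAbove
    (hlo : ∀ V : Set X, IsOpen V → IsOpen (lowerClosure V : Set X)) (hH : Continuous H)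
    {z : Y} {q₀ : X × P}
    (hz : MapClusterPt z (𝓝 q₀) fun q => infAbove (fun x => H (x, q.2)) q.1) :
    z ≤ infAbove (fun x => H (x, q₀.2)) q₀.1 := by
  refine le_sInf ?_
  rintro _ ⟨x', hx', rfl⟩
  by_contra hzx
  obtain ⟨A, ⟨hA, hAc⟩, hAz⟩ := (closed_nhds_basis (H (x', q₀.2))).mem_iff.1
    (isClosed_Ici.isOpen_compl.mem_nhds hzx)
  obtain ⟨a, ha, hza⟩ := hAc.lowerClosure_of_compactSpace.mem_of_mapClusterPt hz
    (eventually_infAbove_mem_lowerClosure hlo hH hx' q₀.2 hA)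
  exact hAz ha hza

theorem eventually_infAbove_inf_mem_closure [CompactSpace X] [OrderClosedTopology X]
    [ContinuousInf Y] (hH : Continuous H) (q₀ : X × P) {W : Set Y}
    (hW : W ∈ 𝓝 (infAbove (fun x => H (x, q₀.2)) q₀.1)) (hWinf : InfClosed W) :
    ∀ᶠ q in 𝓝 q₀, infAbove (fun x => H (x, q.2)) q.1 ⊓ infAbove (fun x => H (x, q₀.2)) q₀.1
      ∈ closure W := by
  set y₀ := infAbove (fun x => H (x, q₀.2)) q₀.1
  have hΨ : Continuous fun q => H q ⊓ y₀ := hH.inf continuous_const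
  have htube : Ici q₀.1 ×ˢ {q₀.2} ⊆ (fun q => H q ⊓ y₀) ⁻¹' interior W := by
    rintro ⟨x, t⟩ ⟨hx, rfl⟩
    change H (x, q₀.2) ⊓ y₀ ∈ interior W
    rw [inf_eq_right.2 (infAbove_le (f := fun x => H (x, q₀.2)) hx)]
    exact mem_interior_iff_mem_nhds.2 hW
  obtain ⟨U, T, hU, hT, hxU, htT, hUT⟩ := generalized_tube_lemma isClosed_Ici.isCompact
    isCompact_singleton (isOpen_interior.preimage hΨ) htube
  filter_upwards [prod_mem_nhds (hU.setOf_Ici_subset.mem_nhds hxU) (hT.mem_nhds (htT rfl))]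
  rintro ⟨x, t⟩ ⟨hxU, ht⟩
  have hxU : Ici x ⊆ U := hxU
  have hS : InfClosed ((· ⊓ y₀) ⁻¹' W) := fun a ha b hb => by
    change a ⊓ b ⊓ y₀ ∈ W
    rw [inf_inf_distrib_right]
    exact hWinf ha hb
  have himg : (fun x' => H (x', t)) '' Ici x ⊆ (· ⊓ y₀) ⁻¹' W := by
    rintro _ ⟨x', hx', rfl⟩
    exact interior_subset (s := W) (hUT (mk_mem_prod (hxU hx') ht))
  exact (continuous_id.inf continuous_const).closure_preimage_subset W
    (sInf_mem_closure_of_infClosed hS himg ⟨_, x, le_rfl, rfl⟩)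

theorem MapClusterPt.infAbove_le [CompactSpace X] [OrderClosedTopology X] [ContinuousInf Y]
    (hbasis : ∀ y : Y, (𝓝 y).HasBasis
      (fun s : Set Y => s ∈ 𝓝 y ∧ ∀ a ∈ s, ∀ b ∈ s, a ⊓ b ∈ s) id)
    (hH : Continuous H) {z : Y} {q₀ : X × P}
    (hz : MapClusterPt z (𝓝 q₀) fun q => infAbove (fun x => H (x, q.2)) q.1) :
    infAbove (fun x => H (x, q₀.2)) q₀.1 ≤ z := by
  set y₀ := infAbove (fun x => H (x, q₀.2)) q₀.1
  have hzy : (z ⊓ y₀) ⤳ y₀ := specializes_iff_pure.2 <|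
    (hbasis y₀).nhds_closure.ge_iff.2 fun W ⟨hW, hWinf⟩ =>
      (isClosed_closure.preimage (continuous_id.inf continuous_const)).mem_of_mapClusterPt hz
        (eventually_infAbove_inf_mem_closure hH q₀ hW fun a ha b hb => hWinf a ha b hb)
  exact inf_eq_right.1 hzy.eq

theorem continuous_infAbove [CompactSpace X] [OrderClosedTopology X] [ContinuousInf Y]
    (hlo : ∀ V : Set X, IsOpen V → IsOpen (lowerClosure V : Set X))
    (hbasis : ∀ y : Y, (𝓝 y).HasBasis
      (fun s : Set Y => s ∈ 𝓝 y ∧ ∀ a ∈ s, ∀ b ∈ s, a ⊓ b ∈ s) id)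
    (hH : Continuous H) : Continuous fun q : X × P => infAbove (fun x => H (x, q.2)) q.1 :=
  continuous_iff_continuousAt.2 fun _ => tendsto_nhds_of_unique_mapClusterPt fun _ hz =>
    le_antisymm (hz.le_infAbove hlo hH) (hz.infAbove_le hbasis hH)

end InfAbove

theorem stmt_7_general {X Y : Type*} [TopologicalSpace X] [PartialOrder X] [CompactSpace X]
    (hpos : IsClosed {p : X × X | p.1 ≤ p.2})
    (hlo : ∀ V : Set X, IsOpen V → IsOpen {x : X | ∃ v ∈ V, x ≤ v})
    [CompleteLattice Y] [TopologicalSpace Y] [CompactSpace Y] [T2Space Y]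
    (hinf : Continuous fun p : Y × Y => p.1 ⊓ p.2)
    (hbasis : ∀ y : Y, (nhds y).HasBasis
      (fun s : Set Y => s ∈ nhds y ∧ ∀ a ∈ s, ∀ b ∈ s, a ⊓ b ∈ s) id)
    (f g : X → Y)
    (H : X × I → Y) (hH : Continuous H)
    (hH0 : ∀ x, H (x, 0) = f x) (hH1 : ∀ x, H (x, 1) = g x) :
    ∃ K : X × I → Y, Continuous K ∧
      (∀ x, K (x, 0) = sInf (f '' {x' : X | x ≤ x'})) ∧
      (∀ x, K (x, 1) = sInf (g '' {x' : X | x ≤ x'})) ∧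
      (∀ t : I, Monotone fun x : X => K (x, t)) := by
  have : OrderClosedTopology X := ⟨hpos⟩
  have : ContinuousInf Y := ⟨hinf⟩
  have : OrderClosedTopology Y := .of_continuousInf
  refine ⟨fun q => infAbove (fun x => H (x, q.2)) q.1, continuous_infAbove hlo hbasis hH,
    fun x => ?_, fun x => ?_, fun t => monotone_infAbove fun x => H (x, t)⟩
  · simp [infAbove, hH0, Ici]
  · simp [infAbove, hH1, Ici]

/-- Let `X` be a compact pospace with lower open partial order and `Y` a complete
lattice carrying a Lawson-lattice topology.  If `f, g : X → Y` are continuous and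
homotopic, then `R f` and `R g` (where `R f x = ⨅ {f x' | x ≤ x'}`) are homotopic
through monotone maps. -/
theorem stmt_7 {X Y : Type*} [TopologicalSpace X] [PartialOrder X] [CompactSpace X]
    (hpos : IsClosed {p : X × X | p.1 ≤ p.2})
    (hlo : ∀ V : Set X, IsOpen V → IsOpen {x : X | ∃ v ∈ V, x ≤ v})
    [CompleteLattice Y] [TopologicalSpace Y] [CompactSpace Y] [T2Space Y]
    (hinf : Continuous fun p : Y × Y => p.1 ⊓ p.2)
    (hbasis : ∀ y : Y, (nhds y).HasBasis
      (fun s : Set Y => s ∈ nhds y ∧ ∀ a ∈ s, ∀ b ∈ s, a ⊓ b ∈ s) id)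
    (f g : X → Y) (hf : Continuous f) (hg : Continuous g)
    (H : X × I → Y) (hH : Continuous H)
    (hH0 : ∀ x, H (x, 0) = f x) (hH1 : ∀ x, H (x, 1) = g x) :
    ∃ K : X × I → Y, Continuous K ∧
      (∀ x, K (x, 0) = sInf (f '' {x' : X | x ≤ x'})) ∧
      (∀ x, K (x, 1) = sInf (g '' {x' : X | x ≤ x'})) ∧
      (∀ t : I, Monotone fun x : X => K (x, t)) :=
  stmt_7_general hpos hlo hinf hbasis f g H hH hH0 hH1
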